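/- arXiv:2004.12886 — 4 statements merged into one kernel-verified Lean document; each statement's English description precedes it below -/
import Mathlib

section
/- Let A be an n×n real matrix all of whose (complex) eigenvalues have negative real part, and let Q be an n×n real symmetric positive definite matrix. Then there exists a real symmetric positive definite matrix P satisfying the Lyapunov equation Aᵀ P + P A = -Q. -/
/-!
The Cayley transform `B = (1 + A)(1 - A)⁻¹` maps the open left half-plane onto the open unit
disc, so by Gelfand's formula the powers of `B` decay geometrically. Hence, for
`M = 2 (1 - A)⁻ᵀ Q (1 - A)⁻¹`, the series `P = ∑ (Bᵀ)ᵏ M Bᵏ` converges to a positive definite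
solution of the Stein equation `Bᵀ P B - P = -M`, and conjugating by `1 - A` turns this into
`Aᵀ P + P A = -Q`.
-/

open Matrix Filter

theorem Complex.re_sub_one_div_add_one (z : ℂ) :
    ((z - 1) / (z + 1)).re = (‖z‖ ^ 2 - 1) / ‖z + 1‖ ^ 2 := by
  rw [Complex.div_re, ← add_div, ← Complex.normSq_eq_norm_sq, ← Complex.normSq_eq_norm_sq]
  congr 1
  simp only [Complex.sub_re, Complex.one_re, Complex.add_re, Complex.sub_im, Complex.one_im,
    sub_zero, Complex.add_im, add_zero, Complex.normSq_apply]
  ring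

theorem spectrum.norm_lt_one_of_mem_cayley {R : Type*} [Ring R] [Algebra ℂ R] {a c : R}
    (ha : ∀ μ ∈ spectrum ℂ a, μ.re < 0) (hc : (1 - a) * c = 1) (hc' : c * (1 - a) = 1) :
    ∀ μ ∈ spectrum ℂ ((1 + a) * c), ‖μ‖ < 1 := by
  intro μ hμ
  by_contra! hμ1
  refine absurd hμ (spectrum.notMem_iff.2 ?_)
  have hfac : algebraMap ℂ R μ - (1 + a) * c = (algebraMap ℂ R (μ - 1) - (μ + 1) • a) * c := by
    calc algebraMap ℂ R μ - (1 + a) * c = μ • ((1 - a) * c) - (1 + a) * c := by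
          rw [hc, Algebra.algebraMap_eq_smul_one]
      _ = _ := by
          simp only [Algebra.algebraMap_eq_smul_one, sub_mul, add_mul, smul_mul_assoc, one_mul,
            smul_sub]
          module
  rw [hfac]
  refine IsUnit.mul ?_ ⟨⟨c, 1 - a, hc', hc⟩, rfl⟩
  by_cases hμ_neg : μ = -1
  · subst hμ_neg
    simpa using (isUnit_iff_ne_zero.2 (by norm_num : (-1 - 1 : ℂ) ≠ 0)).map (algebraMap ℂ R)
  have hne : μ + 1 ≠ 0 := fun h => hμ_neg (eq_neg_of_add_eq_zero_left h)
  -- `(μ - 1) / (μ + 1)` is the preimage of `μ` under `z ↦ (1 + z) / (1 - z)`.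
  have hl : (μ - 1) / (μ + 1) ∉ spectrum ℂ a := fun hl => (ha _ hl).not_ge <| by
    rw [Complex.re_sub_one_div_add_one]
    have : 1 ≤ ‖μ‖ ^ 2 := one_le_pow₀ hμ1
    exact div_nonneg (by linarith) (sq_nonneg _)
  have : algebraMap ℂ R (μ - 1) - (μ + 1) • a
      = (μ + 1) • (algebraMap ℂ R ((μ - 1) / (μ + 1)) - a) := by
    rw [smul_sub, Algebra.smul_def (μ + 1) (algebraMap ℂ R _), ← map_mul, mul_div_cancel₀ _ hne]
  rw [this]
  exact (spectrum.notMem_iff.1 hl).smul (Units.mk0 _ hne)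

theorem summable_norm_pow_of_forall_norm_lt_one {A : Type*} [NormedRing A] [NormedAlgebra ℂ A]
    [CompleteSpace A] {a : A} (ha : ∀ μ ∈ spectrum ℂ a, ‖μ‖ < 1) :
    Summable fun k : ℕ => ‖a ^ k‖ := by
  rcases subsingleton_or_nontrivial A with hA | hA
  · simp [Subsingleton.elim _ (0 : A)]
  have hρ : spectralRadius ℂ a < 1 := by
    simpa using spectrum.spectralRadius_lt_of_forall_lt a (r := 1) fun μ hμ => by
      simpa [← NNReal.coe_lt_coe] using ha μ hμ
  obtain ⟨r, hρr, hr1⟩ := ENNReal.lt_iff_exists_nnreal_btwn.mp hρ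
  have hdecay : ∀ᶠ k : ℕ in atTop, ‖a ^ k‖ ≤ (r : ℝ) ^ k := by
    filter_upwards [(spectrum.pow_nnnorm_pow_one_div_tendsto_nhds_spectralRadius a
      ).eventually_lt_const hρr, eventually_ne_atTop 0] with k hk hk0
    have := ENNReal.rpow_le_rpow hk.le (Nat.cast_nonneg k : (0 : ℝ) ≤ k)
    rw [← ENNReal.rpow_mul, one_div_mul_cancel (Nat.cast_ne_zero.2 hk0), ENNReal.rpow_one,
      ENNReal.rpow_natCast] at this
    exact_mod_cast this
  exact .of_norm_bounded_eventually_nat (summable_geometric_of_lt_one r.2 (by exact_mod_cast hr1))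
    (by simpa using hdecay)

theorem mul_tsum_pow_mul_mul_pow_mul_sub_tsum {R : Type*} [Ring R] [TopologicalSpace R]
    [IsTopologicalRing R] [T2Space R] {a b m : R} (h : Summable fun k : ℕ => b ^ k * m * a ^ k) :
    b * (∑' k, b ^ k * m * a ^ k) * a - ∑' k, b ^ k * m * a ^ k = -m := by
  have hshift : b * (∑' k, b ^ k * m * a ^ k) * a = ∑' k, b ^ (k + 1) * m * a ^ (k + 1) := by
    rw [← h.tsum_mul_left, ← (h.mul_left b).tsum_mul_right]
    simp only [pow_succ' b, pow_succ a, mul_assoc]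
  rw [hshift, h.tsum_eq_zero_add]
  simp

theorem summable_pow_mul_mul_pow {R : Type*} [NormedRing R] [CompleteSpace R] {a b : R}
    (ha : Summable fun k : ℕ => ‖a ^ k‖) (hb : Summable fun k : ℕ => ‖b ^ k‖) (m : R) :
    Summable fun k => b ^ k * m * a ^ k := by
  refine .of_norm_bounded (ha.mul_left ((∑' j, ‖b ^ j‖) * ‖m‖)) fun k => ?_
  calc ‖b ^ k * m * a ^ k‖ ≤ ‖b ^ k‖ * ‖m‖ * ‖a ^ k‖ := norm_mul₃_le
    _ ≤ _ := by gcongr; exact hb.le_tsum k fun j _ => norm_nonneg _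

theorem Matrix.posDef_tsum {ι n : Type*} [Fintype n] {f : ι → Matrix n n ℝ} (hf : Summable f)
    (hpsd : ∀ i, (f i).PosSemidef) {i₀ : ι} (hi₀ : (f i₀).PosDef) : (∑' i, f i).PosDef := by
  refine .of_dotProduct_mulVec_pos ?_ fun x hx => ?_
  · simp only [IsHermitian, conjTranspose_tsum, fun i => (hpsd i).isHermitian.eq]
  · have hsum : HasSum (fun i => star x ⬝ᵥ f i *ᵥ x) (star x ⬝ᵥ (∑' i, f i) *ᵥ x) :=
      hf.hasSum.map ((dotProductBilin ℝ ℝ (star x)).toAddMonoidHom.comp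
        (mulVec.addMonoidHomLeft x))
        (continuous_const.dotProduct (continuous_id.matrix_mulVec continuous_const))
    rw [← hsum.tsum_eq]
    exact hsum.summable.tsum_pos (fun i => (hpsd i).dotProduct_mulVec_nonneg x) i₀
      (hi₀.dotProduct_mulVec_pos hx)

theorem cayley_mul_mul_cayley_sub_self {R : Type*} [Ring R] {a a' c c' p : R}
    (hc : (1 - a) * c = 1) (hc' : c' * (1 - a') = 1) :
    c' * (1 + a') * p * ((1 + a) * c) - p = c' * (2 * (a' * p + p * a)) * c := by
  calc c' * (1 + a') * p * ((1 + a) * c) - p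
      = c' * (1 + a') * p * ((1 + a) * c) - c' * (1 - a') * p * ((1 - a) * c) := by
        rw [hc, hc', one_mul, mul_one]
    _ = c' * (2 * (a' * p + p * a)) * c := by noncomm_ring

theorem lyapunov_of_stein_cayley {R : Type*} [Ring R] {a a' c c' p q : R}
    (hc : (1 - a) * c = 1) (hc' : c' * (1 - a') = 1) (hcu : IsUnit c) (hcu' : IsUnit c')
    (h2 : IsUnit (2 : R)) (h : c' * (1 + a') * p * ((1 + a) * c) - p = -(c' * (2 * q) * c)) :
    a' * p + p * a = -q := by
  rw [cayley_mul_mul_cayley_sub_self hc hc', ← neg_mul, ← mul_neg, ← mul_neg] at h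
  exact h2.mul_left_cancel (hcu'.mul_left_cancel (hcu.mul_right_cancel h))

theorem Matrix.isUnit_of_isUnit_map {n K L : Type*} [Fintype n] [DecidableEq n] [Field K]
    [Field L] (f : K →+* L) {M : Matrix n n K} (h : IsUnit (M.map f)) : IsUnit M := by
  rw [isUnit_iff_isUnit_det, isUnit_iff_ne_zero] at h ⊢
  rw [← RingHom.mapMatrix_apply, ← RingHom.map_det] at h
  exact fun h0 => h (by simp [h0])

namespace Matrix

variable {n : Type*} [Fintype n] [DecidableEq n]

theorem isUnit_one_sub_of_forall_re_neg {A : Matrix n n ℝ}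
    (hA : ∀ μ ∈ spectrum ℂ (A.map (algebraMap ℝ ℂ)), μ.re < 0) : IsUnit (1 - A) := by
  refine isUnit_of_isUnit_map (algebraMap ℝ ℂ) ?_
  simpa [Matrix.map_sub] using spectrum.notMem_iff.1 fun h => (hA 1 h).not_ge zero_le_one

theorem norm_lt_one_of_mem_spectrum_map_cayley {A C : Matrix n n ℝ}
    (hA : ∀ μ ∈ spectrum ℂ (A.map (algebraMap ℝ ℂ)), μ.re < 0)
    (hC : (1 - A) * C = 1) (hC' : C * (1 - A) = 1) :
    ∀ μ ∈ spectrum ℂ (((1 + A) * C).map (algebraMap ℝ ℂ)), ‖μ‖ < 1 := by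
  let f := (algebraMap ℝ ℂ).mapMatrix (m := n)
  have hfC : (1 - f A) * f C = 1 := by simpa only [map_mul, map_sub, map_one] using congrArg f hC
  have hfC' : f C * (1 - f A) = 1 := by
    simpa only [map_mul, map_sub, map_one] using congrArg f hC'
  have hfB : f ((1 + A) * C) = (1 + f A) * f C := by simp only [map_mul, map_add, map_one]
  change ∀ μ ∈ spectrum ℂ (f ((1 + A) * C)), ‖μ‖ < 1
  exact hfB ▸ spectrum.norm_lt_one_of_mem_cayley hA hfC hfC'

open scoped Norms.Frobenius in
theorem summable_transpose_pow_mul_mul_pow {B : Matrix n n ℝ}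
    (hB : ∀ μ ∈ spectrum ℂ (B.map (algebraMap ℝ ℂ)), ‖μ‖ < 1) (M : Matrix n n ℝ) :
    Summable fun k : ℕ => Bᵀ ^ k * M * B ^ k := by
  have hB' : Summable fun k : ℕ => ‖B ^ k‖ := by
    let f := (algebraMap ℝ ℂ).mapMatrix (m := n)
    have hnorm (k : ℕ) : ‖f B ^ k‖ = ‖B ^ k‖ := by
      rw [← map_pow]
      exact frobenius_norm_map_eq _ _ fun x => Complex.norm_real x
    exact (summable_norm_pow_of_forall_norm_lt_one (a := f B) hB).congr hnorm
  refine summable_pow_mul_mul_pow hB' ?_ M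
  simpa only [← transpose_pow, frobenius_norm_transpose] using hB'

end Matrix

/-- Let `A` be an `n × n` real matrix all of whose complex eigenvalues have
negative real part, and let `Q` be a real symmetric positive definite matrix.
Then there exists a real symmetric positive definite matrix `P` satisfying the
Lyapunov equation `Aᵀ P + P A = -Q`. -/
theorem lyapunov_equation_exists_solution
    {n : ℕ} (A Q : Matrix (Fin n) (Fin n) ℝ)
    (hA : ∀ μ ∈ spectrum ℂ (A.map (algebraMap ℝ ℂ)), μ.re < 0)
    (hQsymm : Q.IsSymm)
    (hQpos : ∀ x : Fin n → ℝ, x ≠ 0 → 0 < x ⬝ᵥ Q.mulVec x) :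
    ∃ P : Matrix (Fin n) (Fin n) ℝ, P.IsSymm ∧
      (∀ x : Fin n → ℝ, x ≠ 0 → 0 < x ⬝ᵥ P.mulVec x) ∧
      Aᵀ * P + P * A = -Q := by
  have hQ : Q.PosDef :=
    .of_dotProduct_mulVec_pos (isHermitian_iff_isSymm.2 hQsymm) (by simpa using hQpos)
  obtain ⟨C, hC, hC'⟩ : ∃ C, (1 - A) * C = 1 ∧ C * (1 - A) = 1 := by
    obtain ⟨u, hu⟩ := isUnit_one_sub_of_forall_re_neg hA
    exact ⟨↑u⁻¹, hu ▸ u.mul_inv, hu ▸ u.inv_mul⟩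
  have hCu : IsUnit C := ⟨⟨C, 1 - A, hC', hC⟩, rfl⟩
  set B := (1 + A) * C
  have hM : (Cᵀ * (2 * Q) * C).PosDef := by
    simpa only [conjTranspose_eq_transpose_of_trivial] using
      (two_mul Q ▸ hQ.add hQ).conjTranspose_mul_mul_same (mulVec_injective_of_isUnit hCu)
  set M := Cᵀ * (2 * Q) * C
  have hsum :=
    summable_transpose_pow_mul_mul_pow (norm_lt_one_of_mem_spectrum_map_cayley hA hC hC') M
  set P := ∑' k, Bᵀ ^ k * M * B ^ k
  have hP : P.PosDef := posDef_tsum hsum (i₀ := 0)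
    (fun k => transpose_pow B k ▸ hM.posSemidef.conjTranspose_mul_mul_same (B ^ k))
    (by simpa using hM)
  refine ⟨P, isHermitian_iff_isSymm.1 hP.isHermitian,
    fun x hx => by simpa using hP.dotProduct_mulVec_pos hx, ?_⟩
  have hCt : Cᵀ * (1 - Aᵀ) = 1 := by simpa using congrArg transpose hC
  have h2 : IsUnit (2 : Matrix (Fin n) (Fin n) ℝ) := by
    simpa only [map_ofNat] using
      (isUnit_iff_ne_zero.2 two_ne_zero).map (algebraMap ℝ (Matrix (Fin n) (Fin n) ℝ))
  refine lyapunov_of_stein_cayley hC hCt hCu ((isUnit_transpose C).2 hCu) h2 ?_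
  have hBt : Bᵀ = Cᵀ * (1 + Aᵀ) := by simp only [B, transpose_mul, transpose_add, transpose_one]
  exact hBt ▸ mul_tsum_pow_mul_mul_pow_mul_sub_tsum hsum
end

section
/- Let A be an n×n real matrix all of whose (complex) eigenvalues have negative real part, and let Q be an n×n real symmetric positive definite matrix. Then the solution P of the Lyapunov equation Aᵀ P + P A = -Q is unique: if P₁ and P₂ are real symmetric matrices with Aᵀ P₁ + P₁ A = -Q and Aᵀ P₂ + P₂ A = -Q, then P₁ = P₂. -/
open Matrix Polynomial

/-!
The difference `D = P₁ - P₂` solves the Sylvester equation `Aᵀ D = D (-A)`. Over `ℂ` the spectra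
of `Aᵀ` and `-A` lie in the open left and right half-planes, so they are disjoint. For such an
equation `B X = X C`, the characteristic polynomial `χ` of `C` gives `χ(B) X = X χ(C) = 0`, and
`χ(B)` is invertible by the spectral mapping theorem since no root of `χ` is an eigenvalue of `B`.
-/

theorem Polynomial.aeval_mul_eq_mul_aeval_of_mul_eq_mul {R A : Type*} [CommSemiring R] [Semiring A]
    [Algebra R A] {a b x : A} (h : a * x = x * b) (p : R[X]) :
    aeval a p * x = x * aeval b p := by
  have hpow (k : ℕ) : a ^ k * x = x * b ^ k := (SemiconjBy.pow_right h.symm k).symm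
  induction p using Polynomial.induction_on with
  | C r => simp only [aeval_C, Algebra.commutes]
  | add p q hp hq => simp only [map_add, add_mul, mul_add, hp, hq]
  | monomial k r _ =>
    simp only [map_mul, map_pow, aeval_C, aeval_X, mul_assoc, hpow]
    rw [← mul_assoc, ← mul_assoc, Algebra.commutes]

theorem Matrix.spectrum_transpose {R n : Type*} [CommRing R] [Fintype n] [DecidableEq n]
    (M : Matrix n n R) : spectrum R Mᵀ = spectrum R M := by
  ext r
  simp only [mem_spectrum_iff_not_isUnit_eval_charpoly, charpoly_transpose]

theorem Polynomial.isUnit_aeval_of_forall_eval_ne_zero {K A : Type*} [Field K] [IsAlgClosed K]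
    [Ring A] [Algebra K A] (a : A) {p : K[X]} (hp : p ≠ 0)
    (h : ∀ μ ∈ spectrum K a, p.eval μ ≠ 0) : IsUnit (aeval a p) := by
  rcases le_or_gt p.degree 0 with hdeg | hdeg
  · rw [eq_C_of_degree_le_zero hdeg, aeval_C]
    refine (IsUnit.mk0 _ fun h0 => hp ?_).map (algebraMap K A)
    rw [eq_C_of_degree_le_zero hdeg, h0, C_0]
  · rw [← spectrum.zero_notMem_iff K, spectrum.map_polynomial_aeval_of_degree_pos a p hdeg]
    rintro ⟨μ, hμ, hμ0⟩
    exact h μ hμ hμ0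

theorem Matrix.eq_zero_of_mul_eq_mul_of_disjoint_spectrum {K n : Type*} [Field K] [IsAlgClosed K]
    [Fintype n] [DecidableEq n] {B C X : Matrix n n K}
    (hBC : Disjoint (spectrum K B) (spectrum K C)) (h : B * X = X * C) : X = 0 := by
  have hunit : IsUnit (aeval B C.charpoly) :=
    isUnit_aeval_of_forall_eval_ne_zero B C.charpoly_monic.ne_zero fun μ hμB hμC =>
      hBC.notMem_of_mem_left hμB (mem_spectrum_iff_isRoot_charpoly.mpr hμC)
  have hkill : aeval B C.charpoly * X = 0 := by
    rw [aeval_mul_eq_mul_aeval_of_mul_eq_mul h, aeval_self_charpoly, mul_zero]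
  exact hunit.mul_right_eq_zero.mp hkill

theorem Matrix.eq_zero_of_lyapunov_eq_zero {n : Type*} [Fintype n] [DecidableEq n]
    {A D : Matrix n n ℝ} (hA : ∀ μ ∈ spectrum ℂ (A.map (algebraMap ℝ ℂ)), μ.re < 0)
    (hD : Aᵀ * D + D * A = 0) : D = 0 := by
  set B := A.map (algebraMap ℝ ℂ)
  have hdisj : Disjoint (spectrum ℂ Bᵀ) (spectrum ℂ (-B)) := by
    rw [spectrum_transpose, ← spectrum.neg_eq, Set.disjoint_left]
    intro μ hμ hμneg
    have hneg := hA (-μ) hμneg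
    rw [Complex.neg_re] at hneg
    linarith [hA μ hμ]
  have hDc : Bᵀ * D.map (algebraMap ℝ ℂ) = D.map (algebraMap ℝ ℂ) * -B := by
    have := congrArg (algebraMap ℝ ℂ).mapMatrix (eq_neg_of_add_eq_zero_left hD)
    rwa [map_neg, map_mul, map_mul, RingHom.mapMatrix_apply, RingHom.mapMatrix_apply,
      RingHom.mapMatrix_apply, transpose_map, ← Matrix.mul_neg] at this
  have hDc0 := eq_zero_of_mul_eq_mul_of_disjoint_spectrum hdisj hDc
  exact Matrix.map_injective (algebraMap ℝ ℂ).injective (by simpa using hDc0)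

theorem lyapunov_equation_unique_solution_general
    {n : ℕ} (A Q : Matrix (Fin n) (Fin n) ℝ)
    (hA : ∀ μ ∈ spectrum ℂ (A.map (algebraMap ℝ ℂ)), μ.re < 0)
    (P₁ P₂ : Matrix (Fin n) (Fin n) ℝ)
    (hP₁ : Aᵀ * P₁ + P₁ * A = -Q) (hP₂ : Aᵀ * P₂ + P₂ * A = -Q) :
    P₁ = P₂ := by
  refine sub_eq_zero.mp (Matrix.eq_zero_of_lyapunov_eq_zero hA ?_)
  rw [mul_sub, sub_mul, ← add_sub_add_comm, hP₁, hP₂, sub_self]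

/-- Let `A` be an `n × n` real matrix all of whose complex eigenvalues have
negative real part, and let `Q` be a real symmetric positive definite matrix.
Then the symmetric solution of the Lyapunov equation `Aᵀ P + P A = -Q` is
unique. -/
theorem lyapunov_equation_unique_solution
    {n : ℕ} (A Q : Matrix (Fin n) (Fin n) ℝ)
    (hA : ∀ μ ∈ spectrum ℂ (A.map (algebraMap ℝ ℂ)), μ.re < 0)
    (hQsymm : Q.IsSymm)
    (hQpos : ∀ x : Fin n → ℝ, x ≠ 0 → 0 < x ⬝ᵥ Q.mulVec x)
    (P₁ P₂ : Matrix (Fin n) (Fin n) ℝ) (hP₁symm : P₁.IsSymm) (hP₂symm : P₂.IsSymm)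
    (hP₁ : Aᵀ * P₁ + P₁ * A = -Q) (hP₂ : Aᵀ * P₂ + P₂ * A = -Q) :
    P₁ = P₂ :=
  lyapunov_equation_unique_solution_general A Q hA P₁ P₂ hP₁ hP₂
end

section
/- Let A be an n×n real matrix, and suppose there exist real symmetric positive definite matrices P and Q satisfying the Lyapunov equation Aᵀ P + P A = -Q. Then every (complex) eigenvalue of A has negative real part. -/
/-!
Let `A v = μ v` with `v ≠ 0`. Sandwiching the complexified Lyapunov equation between `v*` and `v`
gives `(μ̄ + μ) v*Pv = -v*Qv`, and taking real parts, `2 Re μ · Re (v*Pv) = -Re (v*Qv)`.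
For a real matrix `M` and `v = x + i y`, `Re (v*Mv) = xᵀMx + yᵀMy`, so both real parts are
positive and `Re μ < 0`.
-/

open Matrix

namespace Matrix

theorem exists_mulVec_eq_smul_of_mem_spectrum {K ι : Type*} [Field K] [Fintype ι]
    [DecidableEq ι] {A : Matrix ι ι K} {μ : K} (hμ : μ ∈ spectrum K A) :
    ∃ v, v ≠ 0 ∧ A *ᵥ v = μ • v := by
  rw [← spectrum_toLin', ← Module.End.hasEigenvalue_iff_mem_spectrum] at hμ
  obtain ⟨v, hv⟩ := hμ.exists_hasEigenvector
  exact ⟨v, hv.2, by simpa using hv.apply_eq_smul⟩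

theorem star_add_mul_dotProduct_mulVec_eq_neg_of_lyapunov {R ι : Type*} [CommRing R]
    [StarRing R] [Fintype ι] {A P Q : Matrix ι ι R} (hLyap : Aᴴ * P + P * A = -Q) {μ : R}
    {v : ι → R} (hv : A *ᵥ v = μ • v) :
    (star μ + μ) * (star v ⬝ᵥ P *ᵥ v) = -(star v ⬝ᵥ Q *ᵥ v) := by
  have hAH : star v ⬝ᵥ Aᴴ *ᵥ (P *ᵥ v) = star μ * (star v ⬝ᵥ P *ᵥ v) := by
    rw [dotProduct_mulVec, vecMul_conjTranspose, star_star, hv, star_smul, smul_dotProduct,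
      smul_eq_mul]
  rw [← dotProduct_neg, ← neg_mulVec, ← hLyap, add_mulVec, dotProduct_add, ← mulVec_mulVec,
    ← mulVec_mulVec, hAH, hv, mulVec_smul, dotProduct_smul, smul_eq_mul]
  ring

theorem conjTranspose_map_algebraMap {m n : Type*} (A : Matrix m n ℝ) :
    (A.map (algebraMap ℝ ℂ))ᴴ = Aᵀ.map (algebraMap ℝ ℂ) := by
  ext
  simp

section RealMatrix

variable {ι : Type*} [Fintype ι]

theorem re_star_dotProduct_map_algebraMap_mulVec (M : Matrix ι ι ℝ) (v : ι → ℂ) :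
    (star v ⬝ᵥ M.map (algebraMap ℝ ℂ) *ᵥ v).re =
      (fun i => (v i).re) ⬝ᵥ M *ᵥ (fun i => (v i).re) +
        (fun i => (v i).im) ⬝ᵥ M *ᵥ (fun i => (v i).im) := by
  simp only [dotProduct, mulVec, Complex.re_sum, Finset.mul_sum, ← Finset.sum_add_distrib]
  refine Finset.sum_congr rfl fun i _ => Finset.sum_congr rfl fun j _ => ?_
  simp [Complex.mul_re]

theorem re_star_dotProduct_map_algebraMap_mulVec_pos {M : Matrix ι ι ℝ}
    (hM : ∀ x : ι → ℝ, x ≠ 0 → 0 < x ⬝ᵥ M *ᵥ x) {v : ι → ℂ} (hv : v ≠ 0) :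
    0 < (star v ⬝ᵥ M.map (algebraMap ℝ ℂ) *ᵥ v).re := by
  have hM_nonneg (x : ι → ℝ) : 0 ≤ x ⬝ᵥ M *ᵥ x := by
    rcases eq_or_ne x 0 with rfl | hx
    · simp
    · exact (hM x hx).le
  rw [re_star_dotProduct_map_algebraMap_mulVec]
  by_cases hre : (fun i => (v i).re) = 0
  · have him : (fun i => (v i).im) ≠ 0 := fun him =>
      hv (funext fun i => Complex.ext (congrFun hre i) (congrFun him i))
    exact add_pos_of_nonneg_of_pos (hM_nonneg _) (hM _ him)
  · exact add_pos_of_pos_of_nonneg (hM _ hre) (hM_nonneg _)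

end RealMatrix

end Matrix

theorem lyapunov_implies_eigenvalues_neg_re_general
    {n : ℕ} (A P Q : Matrix (Fin n) (Fin n) ℝ)
    (hPpos : ∀ x : Fin n → ℝ, x ≠ 0 → 0 < x ⬝ᵥ P.mulVec x)
    (hQpos : ∀ x : Fin n → ℝ, x ≠ 0 → 0 < x ⬝ᵥ Q.mulVec x)
    (hLyap : Aᵀ * P + P * A = -Q) :
    ∀ μ ∈ spectrum ℂ (A.map (algebraMap ℝ ℂ)), μ.re < 0 := by
  intro μ hμ
  obtain ⟨v, hv0, hv⟩ := exists_mulVec_eq_smul_of_mem_spectrum hμ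
  have hLyapC : (A.map (algebraMap ℝ ℂ))ᴴ * P.map (algebraMap ℝ ℂ) +
      P.map (algebraMap ℝ ℂ) * A.map (algebraMap ℝ ℂ) = -Q.map (algebraMap ℝ ℂ) := by
    rw [conjTranspose_map_algebraMap, ← Matrix.map_mul, ← Matrix.map_mul,
      ← Matrix.map_add _ (map_add _), hLyap, Matrix.map_neg _ (map_neg _)]
  have hre := congrArg Complex.re (star_add_mul_dotProduct_mulVec_eq_neg_of_lyapunov hLyapC hv)
  simp only [RCLike.star_def, Complex.mul_re, Complex.add_re, Complex.conj_re, Complex.add_im,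
    Complex.conj_im, neg_add_cancel, zero_mul, sub_zero, Complex.neg_re] at hre
  nlinarith [re_star_dotProduct_map_algebraMap_mulVec_pos hPpos hv0,
    re_star_dotProduct_map_algebraMap_mulVec_pos hQpos hv0]

/-- Let `A` be an `n × n` real matrix and suppose there exist real symmetric
positive definite matrices `P` and `Q` satisfying `Aᵀ P + P A = -Q`.  Then
every complex eigenvalue of `A` has negative real part. -/
theorem lyapunov_implies_eigenvalues_neg_re
    {n : ℕ} (A P Q : Matrix (Fin n) (Fin n) ℝ)
    (hPsymm : P.IsSymm) (hPpos : ∀ x : Fin n → ℝ, x ≠ 0 → 0 < x ⬝ᵥ P.mulVec x)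
    (hQsymm : Q.IsSymm) (hQpos : ∀ x : Fin n → ℝ, x ≠ 0 → 0 < x ⬝ᵥ Q.mulVec x)
    (hLyap : Aᵀ * P + P * A = -Q) :
    ∀ μ ∈ spectrum ℂ (A.map (algebraMap ℝ ℂ)), μ.re < 0 :=
  lyapunov_implies_eigenvalues_neg_re_general A P Q hPpos hQpos hLyap
end

section
/- Let A be an n×n real matrix and suppose there exist real symmetric positive definite matrices P and Q with Aᵀ P + P A = -Q. Then the equilibrium point 0 of the linear system ẋ = A x is asymptotically stable: every differentiable solution x : ℝ → ℝⁿ of x'(t) = A x(t) satisfies x(t) → 0 as t → ∞. -/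
open Matrix Filter

/-!
`V(x) = xᵀ P x` is a Lyapunov function: along a solution, `V' = xᵀ (Aᵀ P + P A) x = -xᵀ Q x`.
Positive definiteness and compactness of the unit sphere give `a ‖x‖² ≤ xᵀ M x ≤ b ‖x‖²` for
`M = P, Q`, hence `V' ≤ -(a_Q / b_P) V`. So `V` decays exponentially, and with it `‖x‖² ≤ V / a_P`.
-/

section QuadraticGrowth

variable {E : Type*} [NormedAddCommGroup E] [NormedSpace ℝ E] {q : E → ℝ}

theorem mul_sq_norm_le_of_forall_sphere_le (hhom : ∀ (r : ℝ) y, q (r • y) = r ^ 2 * q y)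
    {a : ℝ} (ha : ∀ w ∈ Metric.sphere (0 : E) 1, a ≤ q w) (y : E) : a * ‖y‖ ^ 2 ≤ q y := by
  rcases eq_or_ne y 0 with rfl | hy
  · simpa using (hhom 0 0).ge
  · have hw : ‖y‖⁻¹ • y ∈ Metric.sphere (0 : E) 1 := by
      simpa using norm_smul_inv_norm (𝕜 := ℝ) hy
    calc a * ‖y‖ ^ 2 ≤ q (‖y‖⁻¹ • y) * ‖y‖ ^ 2 := by gcongr; exact ha _ hw
      _ = q y := by
        rw [hhom, mul_comm, ← mul_assoc, ← mul_pow, mul_inv_cancel₀ (norm_ne_zero_iff.2 hy),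
          one_pow, one_mul]

theorem exists_pos_le_mul_sq_norm [ProperSpace E] (hq : Continuous q)
    (hhom : ∀ (r : ℝ) y, q (r • y) = r ^ 2 * q y) :
    ∃ b > 0, ∀ y, q y ≤ b * ‖y‖ ^ 2 := by
  obtain ⟨b, hb⟩ := (isCompact_sphere (0 : E) 1).bddAbove_image hq.continuousOn
  have hneg (r : ℝ) (y : E) : -q (r • y) = r ^ 2 * -q y := by rw [hhom]; ring
  refine ⟨max b 1, by positivity, fun y => ?_⟩
  have := mul_sq_norm_le_of_forall_sphere_le (q := fun y => -q y) hneg (a := -max b 1)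
    (fun w hw => neg_le_neg ((hb ⟨w, hw, rfl⟩).trans (le_max_left b 1))) y
  linarith

theorem exists_pos_mul_sq_norm_le [ProperSpace E] (hq : Continuous q)
    (hhom : ∀ (r : ℝ) y, q (r • y) = r ^ 2 * q y) (hpos : ∀ y ≠ 0, 0 < q y) :
    ∃ a > 0, ∀ y, a * ‖y‖ ^ 2 ≤ q y := by
  obtain ⟨a, ha, hle⟩ := (isCompact_sphere (0 : E) 1).exists_forall_le' hq.continuousOn
    fun w hw => hpos w (ne_zero_of_mem_unit_sphere ⟨w, hw⟩)
  exact ⟨a, ha, mul_sq_norm_le_of_forall_sphere_le hhom hle⟩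

end QuadraticGrowth

theorem le_mul_exp_of_hasDerivAt_le_mul {V V' : ℝ → ℝ} {k : ℝ}
    (hV : ∀ t, HasDerivAt V (V' t) t) (hle : ∀ t, V' t ≤ k * V t) {t : ℝ} (ht : 0 ≤ t) :
    V t ≤ V 0 * Real.exp (k * t) := by
  have hW (s : ℝ) : HasDerivAt (fun s => V s * Real.exp (-(k * s)))
      (V' s * Real.exp (-(k * s)) + V s * (Real.exp (-(k * s)) * -k)) s := by
    have := ((hasDerivAt_id s).const_mul k).neg.exp
    exact (hV s).mul (by simpa using this)
  have hanti : Antitone fun s => V s * Real.exp (-(k * s)) := by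
    refine antitone_of_deriv_nonpos (fun s => (hW s).differentiableAt) fun s => ?_
    rw [(hW s).deriv]
    nlinarith [hle s, Real.exp_pos (-(k * s))]
  have := hanti ht
  simp only [mul_zero, neg_zero, Real.exp_zero, mul_one] at this
  rwa [Real.exp_neg, ← div_eq_mul_inv, div_le_iff₀ (Real.exp_pos _)] at this

theorem tendsto_zero_of_sq_norm_le_mul_exp {E : Type*} [SeminormedAddCommGroup E] {x : ℝ → E}
    {C c : ℝ} (hc : 0 < c) (hx : ∀ᶠ t in atTop, ‖x t‖ ^ 2 ≤ C * Real.exp (-c * t)) :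
    Tendsto x atTop (nhds 0) := by
  have hexp : Tendsto (fun t => C * Real.exp (-c * t)) atTop (nhds 0) := by
    have := Real.tendsto_exp_comp_nhds_zero.2
      (tendsto_neg_atBot_iff.2 (tendsto_id.const_mul_atTop hc))
    simpa [neg_mul] using this.const_mul C
  have hsq : Tendsto (fun t => ‖x t‖ ^ 2) atTop (nhds 0) :=
    squeeze_zero' (.of_forall fun t => sq_nonneg _) hx hexp
  simpa [tendsto_zero_iff_norm_tendsto_zero] using hsq.sqrt

section Calculus

variable {𝕜 : Type*} [NontriviallyNormedField 𝕜] {ι : Type*} [Fintype ι]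

theorem HasDerivAt.dotProduct {f g : 𝕜 → ι → 𝕜} {f' g' : ι → 𝕜} {t : 𝕜}
    (hf : HasDerivAt f f' t) (hg : HasDerivAt g g' t) :
    HasDerivAt (fun s => f s ⬝ᵥ g s) (f' ⬝ᵥ g t + f t ⬝ᵥ g') t := by
  simp only [_root_.dotProduct, ← Finset.sum_add_distrib]
  exact HasDerivAt.fun_sum fun i _ => (hasDerivAt_pi.1 hf i).mul (hasDerivAt_pi.1 hg i)

theorem HasDerivAt.const_mulVec {m : Type*} (M : Matrix m ι 𝕜) {f : 𝕜 → ι → 𝕜} {f' : ι → 𝕜}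
    {t : 𝕜} (hf : HasDerivAt f f' t) : HasDerivAt (fun s => M *ᵥ f s) (M *ᵥ f') t :=
  hasDerivAt_pi.2 fun i => by
    simpa [mulVec] using (hasDerivAt_const t (M i)).dotProduct hf

end Calculus

namespace Matrix

variable {ι : Type*} [Fintype ι]

theorem smul_dotProduct_mulVec_smul {R : Type*} [CommSemiring R] (M : Matrix ι ι R) (r : R)
    (y : ι → R) : (r • y) ⬝ᵥ M *ᵥ (r • y) = r ^ 2 * (y ⬝ᵥ M *ᵥ y) := by
  rw [mulVec_smul, smul_dotProduct, dotProduct_smul, smul_eq_mul, smul_eq_mul, ← mul_assoc, sq]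

theorem continuous_dotProduct_mulVec_self {R : Type*} [CommSemiring R] [TopologicalSpace R]
    [IsTopologicalSemiring R] (M : Matrix ι ι R) : Continuous fun y : ι → R => y ⬝ᵥ M *ᵥ y :=
  continuous_id.dotProduct (continuous_const.matrix_mulVec continuous_id)

theorem exists_pos_mul_sq_norm_le_dotProduct_mulVec (M : Matrix ι ι ℝ)
    (hM : ∀ y ≠ 0, 0 < y ⬝ᵥ M *ᵥ y) : ∃ a > 0, ∀ y, a * ‖y‖ ^ 2 ≤ y ⬝ᵥ M *ᵥ y :=
  exists_pos_mul_sq_norm_le M.continuous_dotProduct_mulVec_self (smul_dotProduct_mulVec_smul M) hM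

theorem exists_pos_dotProduct_mulVec_le_mul_sq_norm (M : Matrix ι ι ℝ) :
    ∃ b > 0, ∀ y, y ⬝ᵥ M *ᵥ y ≤ b * ‖y‖ ^ 2 :=
  exists_pos_le_mul_sq_norm M.continuous_dotProduct_mulVec_self (smul_dotProduct_mulVec_smul M)

theorem dotProduct_mulVec_add_dotProduct_mulVec_mulVec {R : Type*} [CommSemiring R]
    (A P : Matrix ι ι R) (y : ι → R) :
    A *ᵥ y ⬝ᵥ P *ᵥ y + y ⬝ᵥ P *ᵥ (A *ᵥ y) = y ⬝ᵥ (Aᵀ * P + P * A) *ᵥ y := by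
  rw [add_mulVec, dotProduct_add, ← mulVec_mulVec, ← mulVec_mulVec,
    dotProduct_mulVec y Aᵀ, vecMul_transpose]

theorem hasDerivAt_dotProduct_mulVec_of_lyapunov {A P Q : Matrix ι ι ℝ}
    (hLyap : Aᵀ * P + P * A = -Q) {x : ℝ → ι → ℝ} (hx : ∀ t, HasDerivAt x (A *ᵥ x t) t) (t : ℝ) :
    HasDerivAt (fun s => x s ⬝ᵥ P *ᵥ x s) (-(x t ⬝ᵥ Q *ᵥ x t)) t := by
  have := (hx t).dotProduct ((hx t).const_mulVec P)
  rwa [dotProduct_mulVec_add_dotProduct_mulVec_mulVec, hLyap, neg_mulVec, dotProduct_neg] at this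

end Matrix

theorem lyapunov_implies_asymptotic_stability_general
    {n : ℕ} (A P Q : Matrix (Fin n) (Fin n) ℝ)
    (hPpos : ∀ x : Fin n → ℝ, x ≠ 0 → 0 < x ⬝ᵥ P.mulVec x)
    (hQpos : ∀ x : Fin n → ℝ, x ≠ 0 → 0 < x ⬝ᵥ Q.mulVec x)
    (hLyap : Aᵀ * P + P * A = -Q)
    (x : ℝ → Fin n → ℝ) (hx : ∀ t, HasDerivAt x (A.mulVec (x t)) t) :
    Tendsto x atTop (nhds 0) := by
  obtain ⟨aP, haP, hP_lower⟩ := P.exists_pos_mul_sq_norm_le_dotProduct_mulVec hPpos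
  obtain ⟨bP, hbP, hP_upper⟩ := P.exists_pos_dotProduct_mulVec_le_mul_sq_norm
  obtain ⟨aQ, haQ, hQ_lower⟩ := Q.exists_pos_mul_sq_norm_le_dotProduct_mulVec hQpos
  let V := fun t => x t ⬝ᵥ P *ᵥ x t
  have hdecay (t : ℝ) (ht : 0 ≤ t) : V t ≤ V 0 * Real.exp (-(aQ / bP) * t) := by
    refine le_mul_exp_of_hasDerivAt_le_mul
      (Matrix.hasDerivAt_dotProduct_mulVec_of_lyapunov hLyap hx) (fun s => ?_) ht
    rw [neg_mul, neg_le_neg_iff, div_mul_eq_mul_div, div_le_iff₀ hbP]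
    nlinarith [hP_upper (x s), hQ_lower (x s)]
  refine tendsto_zero_of_sq_norm_le_mul_exp (C := V 0 / aP) (div_pos haQ hbP) ?_
  filter_upwards [eventually_ge_atTop 0] with t ht
  rw [div_mul_eq_mul_div, le_div_iff₀ haP]
  linarith [hP_lower (x t), hdecay t ht]

/-- Let `A` be an `n × n` real matrix and suppose there exist real symmetric
positive definite matrices `P` and `Q` with `Aᵀ P + P A = -Q`.  Then the
equilibrium point `0` of the linear system `ẋ = A x` is asymptotically
stable: every differentiable solution `x` of `x' t = A (x t)` satisfies
`x t → 0` as `t → ∞`. -/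
theorem lyapunov_implies_asymptotic_stability
    {n : ℕ} (A P Q : Matrix (Fin n) (Fin n) ℝ)
    (hPsymm : P.IsSymm) (hPpos : ∀ x : Fin n → ℝ, x ≠ 0 → 0 < x ⬝ᵥ P.mulVec x)
    (hQsymm : Q.IsSymm) (hQpos : ∀ x : Fin n → ℝ, x ≠ 0 → 0 < x ⬝ᵥ Q.mulVec x)
    (hLyap : Aᵀ * P + P * A = -Q)
    (x : ℝ → Fin n → ℝ) (hx : ∀ t, HasDerivAt x (A.mulVec (x t)) t) :
    Tendsto x atTop (nhds 0) :=
  lyapunov_implies_asymptotic_stability_general A P Q hPpos hQpos hLyap x hx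
end
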